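/- Let X be a Fréchet sequence space over ℤ in which the sequence (e_n)_{n∈ℤ} of canonical vectors is a basis, let w := (w_n)_{n∈ℤ} be a sequence of nonzero scalars, and suppose the bilateral weighted backward shift B_w((x_n)_{n∈ℤ}) := (w_n x_{n+1})_{n∈ℤ} is a well-defined (continuous linear) operator on X. Then B_w is Li-Yorke chaotic if and only if both of the following hold: (a) the sequence (w_{-n} ⋯ w_{-1} e_{-n})_{n∈ℕ} has a subsequence converging to zero in X; and (b) there is a vector (x_n)_{n∈ℤ} ∈ X such that the sequence ( (w_j ⋯ w_{j+n-1} x_{j+n})_{j∈ℤ} )_{n∈ℕ} does not converge to 0 in X as n → ∞. -/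

import Mathlib

open Filter Topology MeasureTheory ENNReal

noncomputable section

def LiYorkePair {M : Type*} [PseudoMetricSpace M] (g : M → M) (x y : M) : Prop :=
  Filter.liminf (fun n : ℕ => edist (g^[n] x) (g^[n] y)) Filter.atTop = 0 ∧
  0 < Filter.limsup (fun n : ℕ => edist (g^[n] x) (g^[n] y)) Filter.atTop

def LiYorkeChaotic {M : Type*} [PseudoMetricSpace M] (g : M → M) : Prop :=
  ∃ S : Set M, ¬ S.Countable ∧ S.Pairwise (LiYorkePair g)

def DenselyLiYorkeChaotic {M : Type*} [PseudoMetricSpace M] (g : M → M) : Prop :=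
  ∃ S : Set M, Dense S ∧ ¬ S.Countable ∧ S.Pairwise (LiYorkePair g)

/-!
Since `B` is linear and the metric is translation invariant, `(x, y)` is a Li–Yorke pair exactly
when `x - y` is semi-irregular (`0` is a cluster point of its orbit, which does not tend to `0`),
and the scalar multiples of one semi-irregular vector form an uncountable scrambled set.
Condition (a) says that `0` is a cluster point of the orbit `Bⁿ e₀ = (w₋ₙ ⋯ w₋₁) e₋ₙ`.

Necessity of (a): by Banach–Steinhaus the partial sum projections `S_N` are equicontinuous, hence
so is `B S_N - S_N B S_N`, which keeps only the boundary term `w₋ₙ₋₁ y₋ₙ e₋ₙ₋₁` of `y`. Applied to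
`y = Bᴹ z` along a subsequence with `Bᴹ z → 0`, with `M - N = k` fixed and `z_k ≠ 0`, the boundary
term is a fixed nonzero multiple of `Bᴺ⁺¹ e₀`.

Sufficiency: if the orbit of `e₀` does not tend to `0`, then `e₀` is semi-irregular. Otherwise every
`e_m`, hence every finitely supported vector, has an orbit tending to `0`. Given also an orbit that
does not tend to `0`, the vectors whose orbit comes close to `0` after any given time, and those
whose orbit leaves a fixed ball after any given time, form dense open sets, and the Baire category
theorem yields a semi-irregular vector.
-/

section Topology

theorem liminf_edist_eq_zero_iff_mapClusterPt {α β : Type*} [PseudoEMetricSpace α]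
    {l : Filter β} {u : β → α} {a : α} :
    liminf (fun n => edist (u n) a) l = 0 ↔ MapClusterPt a l u := by
  rw [Metric.nhds_basis_eball.mapClusterPt_iff_frequently]
  refine ⟨fun h ε hε => frequently_lt_of_liminf_lt (by isBoundedDefault) (h ▸ hε), fun h => ?_⟩
  refine le_antisymm (le_of_forall_gt_imp_ge_of_dense fun ε hε => ?_) zero_le
  exact liminf_le_of_frequently_le' ((h ε hε).mono fun _ hn => le_of_lt hn)

theorem pos_limsup_edist_iff_not_tendsto {α β : Type*} [PseudoEMetricSpace α]
    {l : Filter β} [l.NeBot] {u : β → α} {a : α} :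
    0 < limsup (fun n => edist (u n) a) l ↔ ¬ Tendsto u l (𝓝 a) := by
  rw [tendsto_iff_edist_tendsto_0, pos_iff_ne_zero, not_iff_not]
  exact ⟨fun h => tendsto_of_le_liminf_of_limsup_le zero_le h.le, Tendsto.limsup_eq⟩

theorem exists_strictMono_tendsto_iff_mapClusterPt {α : Type*} [TopologicalSpace α]
    [FirstCountableTopology α] {u : ℕ → α} {x : α} :
    (∃ φ : ℕ → ℕ, StrictMono φ ∧ Tendsto (fun i => u (φ i)) atTop (𝓝 x)) ↔
      MapClusterPt x atTop u :=
  ⟨fun ⟨_, hφ, h⟩ => .of_comp hφ.tendsto_atTop h.mapClusterPt, MapClusterPt.tendsto_subseq⟩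

theorem EquicontinuousAt.tendsto_apply_of_forall_eq {ι α β γ : Type*} [TopologicalSpace α]
    [UniformSpace β] {F : ι → α → β} {x₀ : α} {b : β} (hF : EquicontinuousAt F x₀)
    (hb : ∀ i, F i x₀ = b) {l : Filter γ} {y : γ → α} (hy : Tendsto y l (𝓝 x₀)) (N : γ → ι) :
    Tendsto (fun c => F (N c) (y c)) l (𝓝 b) :=
  Uniform.tendsto_nhds_right.2 fun U hU =>
    (hy.eventually (hF U hU)).mono fun c hc => by simpa only [hb] using hc (N c)

end Topology

theorem iterate_map_smul {R M F : Type*} [SMul R M] [FunLike F M M] [MulActionHomClass F R M M]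
    (f : F) (n : ℕ) (c : R) (x : M) : (⇑f)^[n] (c • x) = c • (⇑f)^[n] x := by
  induction n with
  | zero => rfl
  | succ n ih => simp only [Function.iterate_succ_apply', ih, map_smul]

section OrbitTendstoZero

variable {R M : Type*} [Semiring R] [AddCommMonoid M] [Module R M] [TopologicalSpace M]
  [ContinuousAdd M] [ContinuousConstSMul R M]

def orbitTendstoZero (T : M →L[R] M) : Submodule R M where
  carrier := {x | Tendsto (fun n => T^[n] x) atTop (𝓝 0)}
  add_mem' hx hy := by simpa only [Set.mem_ofPred_eq, iterate_map_add, add_zero] using hx.add hy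
  zero_mem' := by simpa only [Set.mem_ofPred_eq, iterate_map_zero] using tendsto_const_nhds
  smul_mem' c x hx := by
    simpa only [Set.mem_ofPred_eq, iterate_map_smul, smul_zero] using hx.const_smul c

theorem mem_orbitTendstoZero {T : M →L[R] M} {x : M} :
    x ∈ orbitTendstoZero T ↔ Tendsto (fun n => T^[n] x) atTop (𝓝 0) :=
  Iff.rfl

theorem apply_mem_orbitTendstoZero_iff {T : M →L[R] M} {x : M} :
    T x ∈ orbitTendstoZero T ↔ x ∈ orbitTendstoZero T := by
  simp only [mem_orbitTendstoZero]
  exact tendsto_add_atTop_iff_nat (f := fun n => T^[n] x) 1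

end OrbitTendstoZero

section SemiIrregular

def IsSemiIrregular {X : Type*} [Zero X] [TopologicalSpace X] (f : X → X) (x : X) : Prop :=
  MapClusterPt 0 atTop (fun n => f^[n] x) ∧ ¬ Tendsto (fun n => f^[n] x) atTop (𝓝 0)

variable {X : Type*} [NormedAddCommGroup X]

theorem liYorkePair_iff_isSemiIrregular_sub {F : Type*} [FunLike F X X] [AddMonoidHomClass F X X]
    (f : F) (x y : X) : LiYorkePair f x y ↔ IsSemiIrregular f (x - y) := by
  have h : ∀ n, edist (f^[n] x) (f^[n] y) = edist (f^[n] (x - y)) 0 := fun n => by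
    rw [iterate_map_sub, edist_zero_right, edist_eq_enorm_sub]
  simp only [LiYorkePair, IsSemiIrregular, h, liminf_edist_eq_zero_iff_mapClusterPt,
    pos_limsup_edist_iff_not_tendsto]

theorem IsSemiIrregular.smul {𝕜 : Type*} [Field 𝕜] [Module 𝕜 X] [ContinuousConstSMul 𝕜 X]
    {T : X →L[𝕜] X} {x : X} (hx : IsSemiIrregular T x) {c : 𝕜} (hc : c ≠ 0) :
    IsSemiIrregular T (c • x) := by
  simp only [IsSemiIrregular, iterate_map_smul]
  refine ⟨?_, ?_⟩
  · simpa only [smul_zero, Function.comp_def] using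
      hx.1.continuousAt_comp (continuous_const_smul c).continuousAt
  · rw [← smul_zero c, tendsto_const_smul_iff₀ hc]
    exact hx.2

theorem liYorkeChaotic_iff_exists_isSemiIrregular {𝕜 : Type*} [Field 𝕜] [Uncountable 𝕜]
    [Module 𝕜 X] [ContinuousConstSMul 𝕜 X] (T : X →L[𝕜] X) :
    LiYorkeChaotic T ↔ ∃ x, IsSemiIrregular T x := by
  constructor
  · rintro ⟨S, hS, hpair⟩
    obtain ⟨x, hx, y, hy, hxy⟩ := (Set.Infinite.nontrivial fun h => hS h.countable)
    exact ⟨x - y, (liYorkePair_iff_isSemiIrregular_sub T x y).1 (hpair hx hy hxy)⟩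
  · rintro ⟨x, hx⟩
    have hx0 : x ≠ 0 := by
      rintro rfl
      exact hx.2 (by simpa only [iterate_map_zero] using tendsto_const_nhds)
    refine ⟨Set.range fun c : 𝕜 => c • x, fun h => ?_, ?_⟩
    · have := h.preimage (smul_left_injective 𝕜 hx0)
      rw [Set.preimage_range] at this
      exact not_countable (Set.countable_univ_iff.1 this)
    · rintro _ ⟨a, rfl⟩ _ ⟨b, rfl⟩ hab
      rw [liYorkePair_iff_isSemiIrregular_sub, ← sub_smul]
      exact hx.smul (sub_ne_zero.2 fun h => hab (h ▸ rfl))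

end SemiIrregular

section Baire

variable {X F : Type*} [NormedAddCommGroup X] [FunLike F X X] [AddMonoidHomClass F X X]

theorem dense_iUnion_preimage_iterate_norm_gt {f : F}
    (hdense : Dense {x | Tendsto (fun n => f^[n] x) atTop (𝓝 0)}) {x₀ : X} {ε : ℝ} (hε : 0 < ε)
    (hx₀ : ∃ᶠ n in atTop, ε ≤ ‖f^[n] x₀‖) (m : ℕ) :
    Dense (⋃ n ≥ m, f^[n] ⁻¹' {y | ε / 3 < ‖y‖}) := by
  refine Metric.dense_iff.2 fun y r hr => ?_
  by_contra hempty
  have hbound : ∀ b ∈ Metric.ball y r, ∀ n ≥ m, ‖f^[n] b‖ ≤ ε / 3 := fun b hb n hn =>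
    not_lt.1 fun h => hempty ⟨b, hb, Set.mem_biUnion hn h⟩
  -- The ball would contain `y` and `y + (x₀ - v)`, whose orbits differ from that of `x₀` by the
  -- vanishing orbit of `v`.
  obtain ⟨v, hv, hx₀v⟩ := hdense.exists_dist_lt x₀ hr
  have hyv : y + (x₀ - v) ∈ Metric.ball y r := by
    rwa [Metric.mem_ball, dist_eq_norm, add_sub_cancel_left, ← dist_eq_norm]
  have hv_small : ∀ᶠ n in atTop, ‖f^[n] v‖ < ε / 3 := by
    simpa only [Metric.mem_ball, dist_zero_right] using
      hv.eventually (Metric.ball_mem_nhds 0 (by positivity))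
  obtain ⟨n, hx₀n, hmn, hvn⟩ := (hx₀.and_eventually ((eventually_ge_atTop m).and hv_small)).exists
  have hdecomp : f^[n] x₀ = f^[n] (y + (x₀ - v)) - f^[n] y + f^[n] v := by
    rw [iterate_map_add, iterate_map_sub]
    abel
  have h₁ := hbound _ hyv n hmn
  have h₂ := hbound y (Metric.mem_ball_self hr) n hmn
  have htri : ‖f^[n] x₀‖ ≤ ‖f^[n] (y + (x₀ - v))‖ + ‖f^[n] y‖ + ‖f^[n] v‖ := by
    rw [hdecomp]
    exact (norm_add_le _ _).trans (add_le_add_left (norm_sub_le _ _) _)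
  linarith

theorem exists_isSemiIrregular_of_dense [CompleteSpace X] {f : F} (hf : Continuous f)
    (hdense : Dense {x | Tendsto (fun n => f^[n] x) atTop (𝓝 0)}) {x₀ : X}
    (hx₀ : ¬ Tendsto (fun n => f^[n] x₀) atTop (𝓝 0)) : ∃ x, IsSemiIrregular f x := by
  obtain ⟨ε, hε, hfreq⟩ : ∃ ε > 0, ∃ᶠ n in atTop, ε ≤ ‖f^[n] x₀‖ := by
    simpa only [Metric.tendsto_nhds, dist_zero_right, not_forall, not_eventually, not_lt,
      exists_prop] using hx₀
  let small : ℕ × ℕ → Set X := fun p => ⋃ n ≥ p.1, f^[n] ⁻¹' Metric.ball 0 (1 / (p.2 + 1))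
  let large : ℕ → Set X := fun m => ⋃ n ≥ m, f^[n] ⁻¹' {y | ε / 3 < ‖y‖}
  have hsmall : ∀ p, IsOpen (small p) ∧ Dense (small p) := fun p =>
    ⟨isOpen_biUnion fun n _ => Metric.isOpen_ball.preimage (hf.iterate n),
      hdense.mono fun v hv => by
        obtain ⟨n, hn, hball⟩ :=
          ((eventually_ge_atTop p.1).and (hv.eventually (Metric.ball_mem_nhds (0 : X)
            (by positivity : (0 : ℝ) < 1 / (p.2 + 1))))).exists
        exact Set.mem_biUnion hn hball⟩
  have hlarge : ∀ m, IsOpen (large m) := fun m =>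
    isOpen_biUnion fun n _ => (isOpen_lt continuous_const continuous_norm).preimage (hf.iterate n)
  have hgen : Dense (⋂ p : ℕ × ℕ, small p ∩ large p.1) :=
    dense_iInter_of_isOpen (fun p => (hsmall p).1.inter (hlarge p.1))
      fun p => (hsmall p).2.inter_of_isOpen_left
        (dense_iUnion_preimage_iterate_norm_gt hdense hε hfreq p.1) (hsmall p).1
  obtain ⟨x, hx⟩ := hgen.nonempty
  simp only [Set.mem_iInter, Set.mem_inter_iff, small, large, Set.mem_iUnion, Set.mem_preimage,
    exists_prop] at hx
  refine ⟨x, ?_, fun htends => ?_⟩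
  · rw [Metric.nhds_basis_ball_inv_nat_succ.mapClusterPt_iff_frequently]
    exact fun k _ => frequently_atTop.2 fun m => (hx (m, k)).1
  · obtain ⟨N, hN⟩ := eventually_atTop.1
      (htends.eventually (Metric.ball_mem_nhds 0 (by positivity : 0 < ε / 3)))
    obtain ⟨n, hn, hgt⟩ := (hx (N, 0)).2
    have := hN n hn
    rw [dist_zero_right] at this
    exact lt_asymm this hgt

end Baire

theorem prod_Icc_sub_one_mul_prod_Icc_neg_one {M : Type*} [CommMonoid M] (f : ℤ → M) {j k : ℤ}
    (hj0 : j ≤ 0) (hjk : j ≤ k) :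
    (∏ t ∈ Finset.Icc j (k - 1), f t) * ∏ t ∈ Finset.Icc k (-1), f t =
      (∏ t ∈ Finset.Icc j (-1), f t) * ∏ t ∈ Finset.Icc 0 (k - 1), f t := by
  have hdisj : ∀ a b c d : ℤ, b < c → Disjoint (Finset.Icc a b) (Finset.Icc c d) := fun a b c d h =>
    Finset.disjoint_left.2 fun t h1 h2 => by simp only [Finset.mem_Icc] at h1 h2; omega
  rw [← Finset.prod_union (hdisj j (k - 1) k (-1) (by omega)),
    ← Finset.prod_union (hdisj j (-1) 0 (k - 1) (by omega))]
  congr 1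
  ext t
  simp only [Finset.mem_union, Finset.mem_Icc]
  omega

section WeightedShift

variable {𝕂 X : Type*} [RCLike 𝕂] [AddCommGroup X] [Module 𝕂 X] [TopologicalSpace X]
  {ι : X →L[𝕂] (ℤ → 𝕂)} {E : ℤ → X} {w : ℤ → 𝕂} {B : X →L[𝕂] X}

theorem coord_iterate_weightedShift (hB : ∀ (x : X) (n : ℤ), ι (B x) n = w n * ι x (n + 1))
    (n : ℕ) (x : X) (j : ℤ) :
    ι (B^[n] x) j = (∏ t ∈ Finset.Icc j (j + n - 1), w t) * ι x (j + n) := by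
  induction n generalizing j with
  | zero => simp
  | succ n ih =>
    rw [Function.iterate_succ_apply', hB, ih,
      ← Finset.insert_Icc_add_one_left_eq_Icc (by omega : j ≤ j + (n + 1 : ℕ) - 1),
      Finset.prod_insert (by simp)]
    push_cast
    ring_nf

theorem iterate_weightedShift_basis (hι : Function.Injective ι)
    (hE : ∀ n, ι (E n) = Pi.single n 1) (hB : ∀ (x : X) (n : ℤ), ι (B x) n = w n * ι x (n + 1))
    (n : ℕ) (m : ℤ) :
    B^[n] (E m) = (∏ t ∈ Finset.Icc (m - n) (m - 1), w t) • E (m - n) := by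
  refine hι (funext fun j => ?_)
  rw [coord_iterate_weightedShift hB, map_smul, hE, hE, Pi.smul_apply, smul_eq_mul]
  by_cases hj : j = m - n
  · subst hj
    simp only [sub_add_cancel, Pi.single_eq_same, mul_one]
  · simp only [Pi.single_apply, hj, if_false, mul_zero, show j + n ≠ m by omega]

theorem smul_boundary_iterate_eq (hι : Function.Injective ι)
    (hE : ∀ n, ι (E n) = Pi.single n 1) (hB : ∀ (x : X) (n : ℤ), ι (B x) n = w n * ι x (n + 1))
    (z : X) {M N : ℕ} {k : ℤ} (hMN : (M : ℤ) = N + k) :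
    (∏ t ∈ Finset.Icc k (-1), w t) • ((w (-N - 1) * ι (B^[M] z) (-N)) • E (-N - 1)) =
      (ι z k * ∏ t ∈ Finset.Icc 0 (k - 1), w t) • B^[N + 1] (E 0) := by
  have hprod : w (-N - 1) * ∏ t ∈ Finset.Icc (-(N : ℤ)) (k - 1), w t =
      ∏ t ∈ Finset.Icc (-(N : ℤ) - 1) (k - 1), w t := by
    rw [← Finset.insert_Icc_add_one_left_eq_Icc (by omega : -(N : ℤ) - 1 ≤ k - 1),
      Finset.prod_insert (by simp), sub_add_cancel]
  have hsplit :=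
    prod_Icc_sub_one_mul_prod_Icc_neg_one w (j := -N - 1) (k := k) (by omega) (by omega)
  rw [iterate_weightedShift_basis hι hE hB, coord_iterate_weightedShift hB, smul_smul, smul_smul,
    show -(N : ℤ) + M = k by omega, show (0 : ℤ) - (N + 1 : ℕ) = -N - 1 by push_cast; ring,
    zero_sub]
  congr 1
  linear_combination (∏ t ∈ Finset.Icc k (-1), w t) * ι z k * hprod + ι z k * hsplit

variable [ContinuousAdd X] [ContinuousSMul 𝕂 X]

def partialSum (ι : X →L[𝕂] (ℤ → 𝕂)) (E : ℤ → X) (N : ℕ) : X →L[𝕂] X :=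
  ∑ m ∈ Finset.Icc (-(N : ℤ)) N, ((ContinuousLinearMap.proj m).comp ι).smulRight (E m)

theorem partialSum_apply (N : ℕ) (x : X) :
    partialSum ι E N x = ∑ m ∈ Finset.Icc (-(N : ℤ)) N, ι x m • E m := by
  simp [partialSum]

theorem coord_partialSum (hE : ∀ n, ι (E n) = Pi.single n 1) (N : ℕ) (x : X) (j : ℤ) :
    ι (partialSum ι E N x) j = if j ∈ Finset.Icc (-(N : ℤ)) N then ι x j else 0 := by
  simp only [partialSum_apply, map_sum, map_smul, hE, Finset.sum_apply, Pi.smul_apply,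
    Pi.single_apply, smul_eq_mul, mul_ite, mul_one, mul_zero, Finset.sum_ite_eq]

theorem weightedShift_partialSum_sub_partialSum (hι : Function.Injective ι)
    (hE : ∀ n, ι (E n) = Pi.single n 1) (hB : ∀ (x : X) (n : ℤ), ι (B x) n = w n * ι x (n + 1))
    (N : ℕ) (y : X) :
    B (partialSum ι E N y) - partialSum ι E N (B (partialSum ι E N y)) =
      (w (-N - 1) * ι y (-N)) • E (-N - 1) := by
  refine hι (funext fun j => ?_)
  simp only [map_sub, map_smul, Pi.sub_apply, Pi.smul_apply, hB, coord_partialSum hE, hE,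
    Finset.mem_Icc, Pi.single_apply, smul_eq_mul]
  by_cases hj : j = -N - 1
  · subst hj
    simp
  · rw [if_neg hj, mul_zero]
    split_ifs <;> first | omega | ring

end WeightedShift

section Dynamics

variable {𝕂 X : Type*} [RCLike 𝕂] [NormedAddCommGroup X] [Module 𝕂 X] [ContinuousSMul 𝕂 X]
  {ι : X →L[𝕂] (ℤ → 𝕂)} {E : ℤ → X} {w : ℤ → 𝕂} {B : X →L[𝕂] X}

theorem uniformEquicontinuous_partialSum [CompleteSpace X] [Module ℝ X] [IsScalarTower ℝ 𝕂 X]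
    [LocallyConvexSpace ℝ X] (hbasis : ∀ x, Tendsto (fun N => partialSum ι E N x) atTop (𝓝 x)) :
    UniformEquicontinuous fun N => ⇑(partialSum ι E N) :=
  have : ContinuousSMul ℝ X := IsScalarTower.continuousSMul 𝕂
  PolynormableSpace.banach_steinhaus (𝓕 := fun N => (partialSum ι E N).restrictScalars ℝ)
    fun x => (hbasis x).isVonNBounded_range ℝ

theorem tendsto_boundary_of_tendsto (hι : Function.Injective ι)
    (hE : ∀ n, ι (E n) = Pi.single n 1) (hB : ∀ (x : X) (n : ℤ), ι (B x) n = w n * ι x (n + 1))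
    (hS : EquicontinuousAt (fun N => ⇑(partialSum ι E N)) 0) {γ : Type*} {l : Filter γ}
    {y : γ → X} (hy : Tendsto y l (𝓝 0)) (N : γ → ℕ) :
    Tendsto (fun c => (w (-N c - 1) * ι (y c) (-N c)) • E (-N c - 1)) l (𝓝 0) := by
  have h₁ := hS.tendsto_apply_of_forall_eq (fun _ => map_zero _) hy N
  have h₂ : Tendsto (fun c => B (partialSum ι E (N c) (y c))) l (𝓝 0) := by
    simpa only [map_zero, Function.comp_def] using (B.continuous.tendsto 0).comp h₁
  have h₃ := hS.tendsto_apply_of_forall_eq (fun _ => map_zero _) h₂ N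
  simpa only [weightedShift_partialSum_sub_partialSum hι hE hB, sub_zero] using h₂.sub h₃

theorem mapClusterPt_orbit_basis_of_isSemiIrregular (hι : Function.Injective ι)
    (hE : ∀ n, ι (E n) = Pi.single n 1) (hw0 : ∀ n, w n ≠ 0)
    (hB : ∀ (x : X) (n : ℤ), ι (B x) n = w n * ι x (n + 1))
    (hS : EquicontinuousAt (fun N => ⇑(partialSum ι E N)) 0) {z : X} (hz : IsSemiIrregular B z) :
    MapClusterPt 0 atTop fun n => B^[n] (E 0) := by
  obtain ⟨k, hk⟩ : ∃ k, ι z k ≠ 0 := by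
    by_contra! h
    refine hz.2 ?_
    rw [show z = 0 from hι (by ext j; simp [h])]
    simpa only [iterate_map_zero] using tendsto_const_nhds
  obtain ⟨ψ, hψ, hψz⟩ := hz.1.tendsto_subseq
  set N : ℕ → ℕ := fun i => ((ψ i : ℤ) - k).toNat
  have hN : ∀ᶠ i in atTop, (ψ i : ℤ) = N i + k :=
    (hψ.tendsto_atTop.eventually_ge_atTop k.toNat).mono fun i hi => by simp only [N]; omega
  have hc : ι z k * ∏ t ∈ Finset.Icc 0 (k - 1), w t ≠ 0 :=
    mul_ne_zero hk (Finset.prod_ne_zero_iff.2 fun t _ => hw0 t)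
  have hlim : Tendsto (fun i => B^[N i + 1] (E 0)) atTop (𝓝 0) := by
    have := (tendsto_boundary_of_tendsto hι hE hB hS hψz N).const_smul
      (∏ t ∈ Finset.Icc k (-1), w t)
    rw [smul_zero] at this
    rw [← tendsto_const_smul_iff₀ hc, smul_zero]
    exact this.congr' (hN.mono fun i hi => smul_boundary_iterate_eq hι hE hB z hi)
  have hN_atTop : Tendsto (fun i => N i + 1) atTop atTop :=
    tendsto_atTop_atTop.2 fun b => ⟨b + k.toNat, fun i hi => by
      have : i ≤ ψ i := hψ.le_apply
      simp only [N]
      omega⟩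
  exact .of_comp hN_atTop hlim.mapClusterPt

theorem basis_mem_orbitTendstoZero_iff (hι : Function.Injective ι)
    (hE : ∀ n, ι (E n) = Pi.single n 1) (hw0 : ∀ n, w n ≠ 0)
    (hB : ∀ (x : X) (n : ℤ), ι (B x) n = w n * ι x (n + 1)) (m : ℤ) :
    E m ∈ orbitTendstoZero B ↔ E 0 ∈ orbitTendstoZero B := by
  have step : ∀ m, E (m + 1) ∈ orbitTendstoZero B ↔ E m ∈ orbitTendstoZero B := fun m => by
    rw [← apply_mem_orbitTendstoZero_iff,
      show B (E (m + 1)) = w m • E m by simpa using iterate_weightedShift_basis hι hE hB 1 (m + 1),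
      Submodule.smul_mem_iff _ (hw0 m)]
  induction m using Int.induction_on with
  | zero => rfl
  | succ i ih => exact (step i).trans ih
  | pred i ih => rwa [← step, sub_add_cancel]

theorem dense_of_forall_basis_mem (hbasis : ∀ x, Tendsto (fun N => partialSum ι E N x) atTop (𝓝 x))
    (p : Submodule 𝕂 X) (hp : ∀ m, E m ∈ p) : Dense (p : Set X) := fun x =>
  mem_closure_of_tendsto (hbasis x) (Eventually.of_forall fun N => by
    rw [partialSum_apply]
    exact p.sum_mem fun m _ => p.smul_mem _ (hp m))

theorem exists_isSemiIrregular_of_mapClusterPt_orbit_basis [CompleteSpace X]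
    (hι : Function.Injective ι) (hE : ∀ n, ι (E n) = Pi.single n 1) (hw0 : ∀ n, w n ≠ 0)
    (hB : ∀ (x : X) (n : ℤ), ι (B x) n = w n * ι x (n + 1))
    (hbasis : ∀ x, Tendsto (fun N => partialSum ι E N x) atTop (𝓝 x))
    (h0 : MapClusterPt 0 atTop fun n => B^[n] (E 0)) {x₀ : X}
    (hx₀ : ¬ Tendsto (fun n => B^[n] x₀) atTop (𝓝 0)) : ∃ z, IsSemiIrregular B z := by
  by_cases hE0 : E 0 ∈ orbitTendstoZero B
  · exact exists_isSemiIrregular_of_dense B.continuous (dense_of_forall_basis_mem hbasis _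
      fun m => (basis_mem_orbitTendstoZero_iff hι hE hw0 hB m).2 hE0) hx₀
  · exact ⟨E 0, h0, hE0⟩

end Dynamics

theorem bilateral_shift_frechet_liYorke_iff_general
    {𝕂 X : Type} [RCLike 𝕂] [AddCommGroup X] [Module 𝕂 X]
    [MetricSpace X] [CompleteSpace X] [ContinuousSMul 𝕂 X]
    [Module ℝ X] [IsScalarTower ℝ 𝕂 X] [LocallyConvexSpace ℝ X]
    (hinv : ∀ x y z : X, dist (x + z) (y + z) = dist x y)
    -- `X` is a Fréchet sequence space over `ℤ`
    (ι : X →L[𝕂] (ℤ → 𝕂)) (hι : Function.Injective ι)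
    -- the canonical vectors belong to `X` and form a basis
    (E : ℤ → X) (hE : ∀ n, ι (E n) = Pi.single n 1)
    (hbasis : ∀ x : X,
      Tendsto (fun N : ℕ => ∑ m ∈ Finset.Icc (-(N : ℤ)) (N : ℤ), ι x m • E m)
        atTop (nhds x))
    (w : ℤ → 𝕂) (hw0 : ∀ n, w n ≠ 0)
    (B : X →L[𝕂] X) (hB : ∀ (x : X) (n : ℤ), ι (B x) n = w n * ι x (n + 1)) :
    LiYorkeChaotic (⇑B) ↔
      ((∃ n : ℕ → ℕ, StrictMono n ∧
          Tendsto (fun i : ℕ =>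
              (∏ t ∈ Finset.Icc (-(n i : ℤ)) (-1), w t) • E (-(n i : ℤ)))
            atTop (nhds 0)) ∧
        ∃ x : X, ¬ Tendsto (fun n : ℕ => (⇑B)^[n] x) atTop (nhds 0)) := by
  -- `‖x‖ = dist 0 x` is an F-norm: `X` becomes a normed group, but not a normed space.
  let _ : Norm X := ⟨dist 0⟩
  let _ : NormedAddCommGroup X :=
    .ofAddDist (fun _ => rfl) fun x y z => by rw [add_comm z x, add_comm z y, hinv]
  have _ : Uncountable 𝕂 := RCLike.ofReal_injective.uncountable
  have hbasis' : ∀ x, Tendsto (fun N => partialSum ι E N x) atTop (𝓝 x) := by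
    simpa only [partialSum_apply] using hbasis
  have hS := (uniformEquicontinuous_partialSum (𝕂 := 𝕂) hbasis').equicontinuous 0
  have horbit : ∀ n : ℕ, (∏ t ∈ Finset.Icc (-(n : ℤ)) (-1), w t) • E (-(n : ℤ)) = B^[n] (E 0) :=
    fun n => by simpa using (iterate_weightedShift_basis hι hE hB n 0).symm
  have hcluster := exists_strictMono_tendsto_iff_mapClusterPt (u := fun n => B^[n] (E 0)) (x := 0)
  simp only [horbit, hcluster, liYorkeChaotic_iff_exists_isSemiIrregular]
  constructor
  · rintro ⟨z, hz⟩
    exact ⟨mapClusterPt_orbit_basis_of_isSemiIrregular hι hE hw0 hB hS hz, z, hz.2⟩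
  · rintro ⟨h0, x₀, hx₀⟩
    exact exists_isSemiIrregular_of_mapClusterPt_orbit_basis hι hE hw0 hB hbasis' h0 hx₀

theorem bilateral_shift_frechet_liYorke_iff
    {𝕂 X : Type} [RCLike 𝕂] [AddCommGroup X] [Module 𝕂 X]
    [MetricSpace X] [CompleteSpace X] [ContinuousAdd X] [ContinuousSMul 𝕂 X]
    [Module ℝ X] [IsScalarTower ℝ 𝕂 X] [LocallyConvexSpace ℝ X]
    (hinv : ∀ x y z : X, dist (x + z) (y + z) = dist x y)
    -- `X` is a Fréchet sequence space over `ℤ`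
    (ι : X →L[𝕂] (ℤ → 𝕂)) (hι : Function.Injective ι)
    -- the canonical vectors belong to `X` and form a basis
    (E : ℤ → X) (hE : ∀ n, ι (E n) = Pi.single n 1)
    (hbasis : ∀ x : X,
      Tendsto (fun N : ℕ => ∑ m ∈ Finset.Icc (-(N : ℤ)) (N : ℤ), ι x m • E m)
        atTop (nhds x))
    (w : ℤ → 𝕂) (hw0 : ∀ n, w n ≠ 0)
    (B : X →L[𝕂] X) (hB : ∀ (x : X) (n : ℤ), ι (B x) n = w n * ι x (n + 1)) :
    LiYorkeChaotic (⇑B) ↔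
      ((∃ n : ℕ → ℕ, StrictMono n ∧
          Tendsto (fun i : ℕ =>
              (∏ t ∈ Finset.Icc (-(n i : ℤ)) (-1), w t) • E (-(n i : ℤ)))
            atTop (nhds 0)) ∧
        ∃ x : X, ¬ Tendsto (fun n : ℕ => (⇑B)^[n] x) atTop (nhds 0)) :=
  bilateral_shift_frechet_liYorke_iff_general hinv ι hι E hE hbasis w hw0 B hB
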